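/- For any finite graph G with minimum degree δ(G) and any k ≥ 0, the k-limited packing number satisfies L_k(G) ≤ k·|V(G)|/(δ(G) + 1). -/

import Mathlib

/-- The closed neighbourhood `N[v] = {v} ∪ N(v)` of a vertex `v`. -/
def SimpleGraph.closedNbhd {V : Type*} (G : SimpleGraph V) (v : V) : Set V :=
  insert v (G.neighborSet v)

/-- A set `X ⊆ V(G)` is a `k`-limited packing if `|N[v] ∩ X| ≤ k` for every vertex `v`. -/
def SimpleGraph.IsLimitedPacking {V : Type*} (G : SimpleGraph V) (k : ℕ) (X : Set V) : Prop :=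
  ∀ v : V, (X ∩ G.closedNbhd v).ncard ≤ k

/-- `L_k(G)`: the maximum cardinality of a `k`-limited packing in `G`. -/
noncomputable def SimpleGraph.limitedPackingNumber {V : Type*} (G : SimpleGraph V) (k : ℕ) : ℕ :=
  sSup {n | ∃ X : Set V, G.IsLimitedPacking k X ∧ X.ncard = n}

namespace SimpleGraph

variable {V : Type*} (G : SimpleGraph V)

lemma mem_closedNbhd {v w : V} : w ∈ G.closedNbhd v ↔ w = v ∨ G.Adj v w := Iff.rfl

lemma mem_closedNbhd_comm {v w : V} : w ∈ G.closedNbhd v ↔ v ∈ G.closedNbhd w := by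
  simp only [mem_closedNbhd, eq_comm, G.adj_comm]

lemma ncard_closedNbhd [Fintype V] [DecidableRel G.Adj] (v : V) :
    (G.closedNbhd v).ncard = G.degree v + 1 := by
  classical
  have : G.closedNbhd v = ↑(insert v (G.neighborFinset v)) := by
    ext w; simp [mem_closedNbhd]
  rw [this, Set.ncard_coe_finset, Finset.card_insert_of_notMem (by simp),
    card_neighborFinset_eq_degree]

lemma minDegree_add_one_le_ncard_closedNbhd [Fintype V] [DecidableRel G.Adj] (v : V) :
    G.minDegree + 1 ≤ (G.closedNbhd v).ncard := by
  rw [ncard_closedNbhd]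
  exact Nat.succ_le_succ (G.minDegree_le_degree v)

/-- Double counting the pairs `(x, v)` with `x ∈ X ∩ N[v]`: each `x ∈ X` lies in
`|N[x]| ≥ δ + 1` closed neighbourhoods, and each `N[v]` contains at most `k` points of `X`. -/
theorem IsLimitedPacking.minDegree_add_one_mul_ncard_le [Fintype V] [DecidableRel G.Adj]
    {k : ℕ} {X : Set V} (hX : G.IsLimitedPacking k X) :
    (G.minDegree + 1) * X.ncard ≤ k * Fintype.card V := by
  classical
  have key := Finset.card_mul_le_card_mul (s := X.toFinset) (t := Finset.univ)
    (r := fun x v => x ∈ G.closedNbhd v) (m := G.minDegree + 1) (n := k)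
    (fun x _ => by
      convert G.minDegree_add_one_le_ncard_closedNbhd x using 1
      rw [← Set.ncard_coe_finset]
      congr 1; ext v; simp [G.mem_closedNbhd_comm])
    (fun v _ => by
      convert hX v using 1
      rw [← Set.ncard_coe_finset]
      congr 1; ext x; simp)
  rw [← Set.ncard_eq_toFinset_card', Finset.card_univ] at key
  linarith

lemma exists_isLimitedPacking_ncard_eq_limitedPackingNumber [Finite V] (k : ℕ) :
    ∃ X, G.IsLimitedPacking k X ∧ X.ncard = G.limitedPackingNumber k :=
  Nat.sSup_mem (s := {n | ∃ X, G.IsLimitedPacking k X ∧ X.ncard = n})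
    ⟨0, ∅, fun v => by simp, Set.ncard_empty V⟩
    ⟨Nat.card V, by rintro _ ⟨X, -, rfl⟩; exact Set.ncard_le_card X⟩

end SimpleGraph

/-- For any finite graph `G` and `k ≥ 0`, `L_k(G) ≤ k · |V(G)| / (δ(G) + 1)`. -/
theorem stmt14 {V : Type*} [Fintype V] (G : SimpleGraph V) [DecidableRel G.Adj] (k : ℕ) :
    (G.minDegree + 1) * G.limitedPackingNumber k ≤ k * Fintype.card V := by
  obtain ⟨X, hX, hcard⟩ := G.exists_isLimitedPacking_ncard_eq_limitedPackingNumber k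
  exact hcard ▸ hX.minDegree_add_one_mul_ncard_le
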